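/- arXiv:1306.2046 — 2 statements merged into one kernel-verified Lean document; each statement's English description precedes it below -/
import Mathlib

section
/- The two-point Taylor coefficients A_n(a,z), B_n(a,z) of f(t) = (1-zt)^{-a} at t = 0 and t = 1 satisfy the recurrence A_{n+1} = \frac{-z(a+2n) A_n + [1 + n(2-z)] B_n}{n+1} and B_{n+1} = \frac{z(2-z)(a+2n) A_n + [z(a+2) + n(6z - z^2 - 4) - 2] B_n}{(n+1)(1-z)}, where A_n, B_n are defined by the explicit formulas A_n(a,z) = \frac{1}{n!}\sum_{k=0}^n \frac{(n+k-1)!}{k!(n-k)!}[(-1)^n n - (-1)^k k (1-z)^{k-a-n}](a)_{n-k} z^{n-k} (for n \geq 1, A_0 = 1) and B_n(a,z) = \frac{1}{n!}\sum_{k=0}^n \frac{(n+k)!}{k!(n-k)!}[(-1)^k (1-z)^{k-a-n} + (-1)^{n+1}](a)_{n-k} z^{n-k} (for n \geq 1, B_0 = (1-z)^{-a} - 1). -/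
/-!
Write `w = 1 - z` and `y = z / (z - 1)`. Pulling the factor `(1 - z) ^ (k - a - n)` out of the
summands splits the coefficients as `A_n(z) = P_n(z) + w^(-a) (P_n(y) + Q_n(y))` and
`B_n(z) = Q_n(z) - w^(-a) Q_n(y)`, where `P_n`, `Q_n` are polynomial sums over `k + j = n`.

For every `x`, `(P_n(x), Q_n(x))` satisfies the recurrence: each of its two equations is a
Wilf–Zeilberger telescoping over the antidiagonal. The recurrence is linear, and invariant under
`(A, B, y) ↦ (A + B, -B, z)`: this is the reflection `t ↦ 1 - t`, which turns `(1 - z t)^(-a)`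
into `w^(-a) (1 - y t)^(-a)` and exchanges the two expansion points.
-/

open Complex

noncomputable def Acoef (a z : ℂ) : ℕ → ℂ
  | 0 => 1
  | n + 1 =>
      (1 / ((n + 1).factorial : ℂ)) *
        ∑ k ∈ Finset.range (n + 2),
          ((n + 1 + k - 1).factorial : ℂ) / ((k.factorial : ℂ) * ((n + 1 - k).factorial : ℂ)) *
            ((-1) ^ (n + 1) * (n + 1 : ℂ) - (-1) ^ k * (k : ℂ) * (1 - z) ^ ((k : ℂ) - a - (n + 1 : ℂ))) *
            (ascPochhammer ℂ (n + 1 - k)).eval a * z ^ (n + 1 - k)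

noncomputable def Bcoef (a z : ℂ) : ℕ → ℂ
  | 0 => (1 - z) ^ (-a) - 1
  | n + 1 =>
      (1 / ((n + 1).factorial : ℂ)) *
        ∑ k ∈ Finset.range (n + 2),
          ((n + 1 + k).factorial : ℂ) / ((k.factorial : ℂ) * ((n + 1 - k).factorial : ℂ)) *
            ((-1) ^ k * (1 - z) ^ ((k : ℂ) - a - (n + 1 : ℂ)) + (-1) ^ (n + 2)) *
            (ascPochhammer ℂ (n + 1 - k)).eval a * z ^ (n + 1 - k)

open Finset Nat

theorem Finset.Nat.sum_antidiagonal_sub_eq {M : Type*} [AddCommGroup M] (H : ℕ → ℕ → M)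
    (n : ℕ) :
    ∑ p ∈ antidiagonal n, (H (p.1 + 1) p.2 - H p.1 (p.2 + 1)) = H (n + 1) 0 - H 0 (n + 1) := by
  have h₁ := Finset.Nat.sum_antidiagonal_succ (f := fun p => H p.1 p.2) (n := n)
  have h₂ := Finset.Nat.sum_antidiagonal_succ' (f := fun p => H p.1 p.2) (n := n)
  rw [sum_sub_distrib, sub_eq_sub_iff_add_eq_add, add_comm]
  exact (h₂.symm.trans h₁).symm

namespace Nat

theorem succ_mul_multichoose_self_succ (n : ℕ) :
    (n + 1) * (n + 1).multichoose (n + 1) = (2 * n + 1) * centralBinom n := by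
  rw [multichoose_eq, show n + 1 + (n + 1) - 1 = 2 * n + 1 by omega,
    centralBinom_eq_two_mul_choose, add_one_mul_choose_eq, mul_comm]

section CharZeroField

variable {K : Type*} [Field K] [CharZero K]

theorem cast_multichoose_succ_add (i j : ℕ) :
    ((i + 1 + j).multichoose (i + 1) : K) = (i + j + 1) * (2 * i + j + 1).choose i / (i + 1) := by
  have h := choose_succ_right_eq (2 * i + j + 1) i
  rw [show 2 * i + j + 1 - i = i + j + 1 by omega] at h
  rw [multichoose_eq, show i + 1 + j + (i + 1) - 1 = 2 * i + j + 1 by omega,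
    eq_div_iff (cast_add_one_ne_zero i)]
  exact_mod_cast h.trans (mul_comm _ _)

theorem cast_choose_two_mul_succ_add (i j : ℕ) :
    ((2 * (i + 1) + j).choose (i + 1) : K) =
      (2 * i + j + 2) * (2 * i + j + 1).choose i / (i + 1) := by
  have h := add_one_mul_choose_eq (2 * i + j + 1) i
  rw [show 2 * i + j + 1 + 1 = 2 * (i + 1) + j by omega] at h
  rw [eq_div_iff (cast_add_one_ne_zero i)]
  exact_mod_cast h.symm.trans (by ring)

theorem cast_choose_two_mul_add_two (i j : ℕ) :
    ((2 * i + j + 2).choose i : K) = (2 * i + j + 2) * (2 * i + j + 1).choose i / (i + j + 2) := by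
  have h := choose_mul_succ_eq (2 * i + j + 1) i
  rw [show 2 * i + j + 1 + 1 - i = i + j + 2 by omega,
    show 2 * i + j + 1 + 1 = 2 * i + j + 2 by omega] at h
  rw [eq_div_iff (by exact_mod_cast (show i + j + 2 ≠ 0 by omega))]
  exact_mod_cast h.symm.trans (by ring)

end CharZeroField

end Nat

theorem Complex.cpow_natCast_sub_sub_succ {w : ℂ} (hw : w ≠ 0) (a : ℂ) (k n : ℕ) :
    w ^ ((k : ℂ) - a - (n + 1 : ℂ)) = w ^ (-a) * w ^ k / w ^ (n + 1) := by
  rw [show (k : ℂ) - a - (n + 1 : ℂ) = k + -a - ((n + 1 : ℕ) : ℂ) by push_cast; ring,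
    cpow_sub _ _ hw, cpow_add _ _ hw, cpow_natCast, cpow_natCast]
  ring

namespace TwoPoint

/-- The coefficient of `t ^ j` in `(1 - x t) ^ (-a)`. -/
noncomputable def negBinomCoeff (a x : ℂ) (j : ℕ) : ℂ :=
  (ascPochhammer ℂ j).eval a * x ^ j / j !

theorem negBinomCoeff_succ (a x : ℂ) (j : ℕ) :
    negBinomCoeff a x (j + 1) = x * (a + j) * negBinomCoeff a x j / (j + 1) := by
  simp only [negBinomCoeff, ascPochhammer_succ_eval, factorial_succ]
  push_cast
  field_simp
  ring

/- The paper's factor `n (n + k - 1)! / (n! k!)` is written `n.multichoose k`, which keeps the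
splitting valid at `n = 0`. -/
noncomputable def termA (a x : ℂ) (k j : ℕ) : ℂ :=
  ((k + j).multichoose k : ℂ) * negBinomCoeff a x j

noncomputable def termB (a x : ℂ) (k j : ℕ) : ℂ :=
  ((2 * k + j).choose k : ℂ) * negBinomCoeff a x j

theorem termA_succ_right (a x : ℂ) (k j : ℕ) :
    termA a x k (j + 1) = (2 * k + j).choose k * negBinomCoeff a x (j + 1) := by
  rw [termA, multichoose_eq, show k + (j + 1) + k - 1 = 2 * k + j by omega]

/- Wilf–Zeilberger certificates for the two equations of the recurrence. -/
noncomputable def certA (a x : ℂ) : ℕ → ℕ → ℂ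
  | 0, _ => 0
  | i + 1, j => -(2 * (i + j : ℂ) + 1) * termB a x i j

noncomputable def certB (a x : ℂ) : ℕ → ℕ → ℂ
  | 0, _ => 0
  | i + 1, j => ((4 * i + 3 * j + 2) * x - (4 * (i + j) + 2)) * termB a x i j

theorem certA_sub_eq (a x : ℂ) (k j : ℕ) :
    certA a x (k + 1) j - certA a x k (j + 1) =
      ((k + j : ℂ) + 1) * termA a x k (j + 1) - x * (a + 2 * (k + j)) * termA a x k j
        - (1 + 2 * (k + j) - (k + j) * x) * termB a x k j := by
  cases k with
  | zero =>
    simp only [termA, termB, certA, negBinomCoeff_succ, CharP.cast_eq_zero, zero_add,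
      multichoose_zero_right, choose_zero_right, cast_one, one_mul, mul_zero, sub_zero]
    field_simp
    ring
  | succ i =>
    rw [termA_succ_right]
    simp only [termA, termB, certA, negBinomCoeff_succ, ← add_assoc,
      cast_multichoose_succ_add, cast_choose_two_mul_succ_add]
    push_cast
    field_simp
    ring

theorem certB_sub_eq (a x : ℂ) (k j : ℕ) :
    certB a x (k + 1) j - certB a x k (j + 1) =
      ((k + j : ℂ) + 1) * (1 - x) * termB a x k (j + 1)
        - x * (2 - x) * (a + 2 * (k + j)) * termA a x k j
        + (x * (a + 2) + (k + j) * (6 * x - x ^ 2 - 4) - 2) * termB a x k j := by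
  cases k with
  | zero =>
    simp only [termA, termB, certB, negBinomCoeff_succ, CharP.cast_eq_zero, zero_add,
      multichoose_zero_right, choose_zero_right, cast_one, one_mul, mul_zero, sub_zero]
    field_simp
    ring
  | succ i =>
    simp only [termA, termB, certB, negBinomCoeff_succ,
      cast_multichoose_succ_add, cast_choose_two_mul_succ_add]
    rw [show 2 * i + (j + 1) + 1 = 2 * i + j + 2 by ring, cast_choose_two_mul_add_two,
      show 2 * i + (j + 1) = 2 * i + j + 1 by ring]
    have : (i + j + 2 : ℂ) ≠ 0 := by exact_mod_cast (show i + j + 2 ≠ 0 by omega)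
    push_cast
    field_simp
    ring

noncomputable def polyPartA (a x : ℂ) (n : ℕ) : ℂ :=
  (-1) ^ n * ∑ p ∈ antidiagonal n, termA a x p.1 p.2

noncomputable def polyPartB (a x : ℂ) (n : ℕ) : ℂ :=
  -(-1) ^ n * ∑ p ∈ antidiagonal n, termB a x p.1 p.2

theorem polyPartA_zero (a x : ℂ) : polyPartA a x 0 = 1 := by
  simp [polyPartA, termA, negBinomCoeff]

theorem polyPartB_zero (a x : ℂ) : polyPartB a x 0 = -1 := by
  simp [polyPartB, termB, negBinomCoeff]

theorem polyPartA_succ (a x : ℂ) (n : ℕ) :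
    (n + 1) * polyPartA a x (n + 1) =
      -x * (a + 2 * n) * polyPartA a x n + (1 + n * (2 - x)) * polyPartB a x n := by
  have hsum : ∑ p ∈ antidiagonal n, (((n : ℂ) + 1) * termA a x p.1 (p.2 + 1)
      - x * (a + 2 * n) * termA a x p.1 p.2 - (1 + 2 * n - n * x) * termB a x p.1 p.2)
      = certA a x (n + 1) 0 := by
    rw [← sub_zero (certA a x (n + 1) 0), show (0 : ℂ) = certA a x 0 (n + 1) from rfl,
      ← Finset.Nat.sum_antidiagonal_sub_eq]
    refine sum_congr rfl fun p hp => ?_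
    rw [HasAntidiagonal.mem_antidiagonal] at hp
    subst hp
    push_cast
    exact (certA_sub_eq a x p.1 p.2).symm
  have htop : ((n : ℂ) + 1) * termA a x (n + 1) 0 = -certA a x (n + 1) 0 := by
    have h : ((n + 1 : ℕ) : ℂ) * ((n + 1).multichoose (n + 1) : ℕ) =
        (2 * n + 1 : ℕ) * centralBinom n := by
      exact_mod_cast succ_mul_multichoose_self_succ n
    simp only [termA, termB, certA, add_zero, ← centralBinom_eq_two_mul_choose]
    push_cast at h
    linear_combination negBinomCoeff a x 0 * h
  rw [sum_sub_distrib, sum_sub_distrib, ← mul_sum, ← mul_sum, ← mul_sum] at hsum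
  rw [polyPartA, polyPartB, polyPartA, Finset.Nat.sum_antidiagonal_succ']
  linear_combination (-1) ^ (n + 1) * (hsum + htop)

theorem polyPartB_succ (a x : ℂ) (n : ℕ) :
    (n + 1) * (1 - x) * polyPartB a x (n + 1) = x * (2 - x) * (a + 2 * n) * polyPartA a x n
      + (x * (a + 2) + n * (6 * x - x ^ 2 - 4) - 2) * polyPartB a x n := by
  have hsum : ∑ p ∈ antidiagonal n, (((n : ℂ) + 1) * (1 - x) * termB a x p.1 (p.2 + 1)
      - x * (2 - x) * (a + 2 * n) * termA a x p.1 p.2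
      + (x * (a + 2) + n * (6 * x - x ^ 2 - 4) - 2) * termB a x p.1 p.2)
      = certB a x (n + 1) 0 := by
    rw [← sub_zero (certB a x (n + 1) 0), show (0 : ℂ) = certB a x 0 (n + 1) from rfl,
      ← Finset.Nat.sum_antidiagonal_sub_eq]
    refine sum_congr rfl fun p hp => ?_
    rw [HasAntidiagonal.mem_antidiagonal] at hp
    subst hp
    push_cast
    exact (certB_sub_eq a x p.1 p.2).symm
  have htop : ((n : ℂ) + 1) * (1 - x) * termB a x (n + 1) 0 = -certB a x (n + 1) 0 := by
    have h : ((n + 1 : ℕ) : ℂ) * (centralBinom (n + 1) : ℕ) =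
        (2 * (2 * n + 1) : ℕ) * centralBinom n := by
      exact_mod_cast succ_mul_centralBinom_succ n
    simp only [termB, certB, add_zero, ← centralBinom_eq_two_mul_choose]
    push_cast at h
    linear_combination (1 - x) * negBinomCoeff a x 0 * h
  rw [sum_add_distrib, sum_sub_distrib, ← mul_sum, ← mul_sum, ← mul_sum] at hsum
  rw [polyPartB, polyPartA, polyPartB, Finset.Nat.sum_antidiagonal_succ']
  linear_combination (-1) ^ n * (hsum + htop)

def Recurrence (a z : ℂ) (A B : ℕ → ℂ) (n : ℕ) : Prop :=
  (n + 1) * A (n + 1) = -z * (a + 2 * n) * A n + (1 + n * (2 - z)) * B n ∧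
    (n + 1) * (1 - z) * B (n + 1) =
      z * (2 - z) * (a + 2 * n) * A n + (z * (a + 2) + n * (6 * z - z ^ 2 - 4) - 2) * B n

theorem recurrence_polyPart (a x : ℂ) (n : ℕ) :
    Recurrence a x (polyPartA a x) (polyPartB a x) n :=
  ⟨polyPartA_succ a x n, polyPartB_succ a x n⟩

theorem Recurrence.add_const_mul {a z c : ℂ} {A₁ B₁ A₂ B₂ : ℕ → ℂ} {n : ℕ}
    (h₁ : Recurrence a z A₁ B₁ n) (h₂ : Recurrence a z A₂ B₂ n) :
    Recurrence a z (fun m => A₁ m + c * A₂ m) (fun m => B₁ m + c * B₂ m) n :=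
  ⟨by linear_combination h₁.1 + c * h₂.1, by linear_combination h₁.2 + c * h₂.2⟩

theorem Recurrence.reflect {a z : ℂ} {A B : ℕ → ℂ} {n : ℕ} (hz : 1 - z ≠ 0)
    (h : Recurrence a (z / (z - 1)) A B n) :
    Recurrence a z (fun m => A m + B m) (fun m => -B m) n := by
  have hz' : z - 1 ≠ 0 := fun h0 => hz (by linear_combination -h0)
  obtain ⟨hA, hB⟩ := h
  field_simp at hA hB
  constructor
  · apply mul_left_cancel₀ hz'
    linear_combination hA - hB
  · linear_combination -hB

theorem Acoef_eq (a z : ℂ) (hz : 1 - z ≠ 0) :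
    Acoef a z = fun n => polyPartA a z n
      + (1 - z) ^ (-a) * (polyPartA a (z / (z - 1)) n + polyPartB a (z / (z - 1)) n) := by
  funext n
  cases n with
  | zero => simp [Acoef, polyPartA_zero, polyPartB_zero]
  | succ n =>
      simp only [Acoef, polyPartA, polyPartB, Finset.Nat.sum_antidiagonal_eq_sum_range_succ_mk,
        mul_sum, ← sum_add_distrib]
      refine sum_congr rfl fun k hk => ?_
      obtain ⟨j, hj⟩ : ∃ j, n + 1 = k + j := ⟨n + 1 - k, by grind⟩
      rw [show n + 1 - k = j by omega, show n + 1 + k - 1 = k + n by omega,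
        cpow_natCast_sub_sub_succ hz]
      simp only [termA, termB]
      rw [← hj, multichoose_eq, show n + 1 + k - 1 = k + n by omega,
        show 2 * k + j = k + (n + 1) by omega, Nat.cast_add_choose, Nat.cast_add_choose]
      have hw : (z - 1) ^ j = (-1) ^ j * (1 - z) ^ j := by rw [← mul_pow]; ring
      have hn : (n : ℂ) = k + j - 1 := by rw [eq_sub_iff_add_eq]; exact_mod_cast hj
      rw [show k + (n + 1) = k + n + 1 from rfl, factorial_succ, factorial_succ,
        show (1 - z) ^ (n + 1) = (1 - z) ^ k * (1 - z) ^ j by rw [hj, pow_add],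
        show ((-1) ^ (n + 1) : ℂ) = (-1) ^ k * (-1) ^ j by rw [hj, pow_add]]
      simp only [negBinomCoeff, div_pow, hw]
      push_cast
      field_simp
      rw [hn]
      ring

theorem Bcoef_eq (a z : ℂ) (hz : 1 - z ≠ 0) :
    Bcoef a z = fun n => polyPartB a z n + (1 - z) ^ (-a) * -polyPartB a (z / (z - 1)) n := by
  funext n
  cases n with
  | zero => simp [Bcoef, polyPartB_zero]; ring
  | succ n =>
      simp only [Bcoef, polyPartB, Finset.Nat.sum_antidiagonal_eq_sum_range_succ_mk, mul_sum,
        mul_neg, neg_mul, ← sum_neg_distrib, ← sum_add_distrib]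
      refine sum_congr rfl fun k hk => ?_
      obtain ⟨j, hj⟩ : ∃ j, n + 1 = k + j := ⟨n + 1 - k, by grind⟩
      rw [show n + 1 - k = j by omega, cpow_natCast_sub_sub_succ hz]
      simp only [termB]
      rw [show 2 * k + j = k + (n + 1) by omega, show n + 1 + k = k + (n + 1) by omega,
        Nat.cast_add_choose]
      have hw : (z - 1) ^ j = (-1) ^ j * (1 - z) ^ j := by rw [← mul_pow]; ring
      rw [show (1 - z) ^ (n + 1) = (1 - z) ^ k * (1 - z) ^ j by rw [hj, pow_add],
        show ((-1) ^ (n + 1) : ℂ) = (-1) ^ k * (-1) ^ j by rw [hj, pow_add],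
        show ((-1) ^ (n + 2) : ℂ) = -((-1) ^ k * (-1) ^ j) by rw [pow_succ, hj, pow_add]; ring]
      simp only [negBinomCoeff, div_pow, hw]
      field_simp
      ring

end TwoPoint

theorem two_point_coeff_recurrence (a z : ℂ) (hz : ¬(z.im = 0 ∧ 1 ≤ z.re)) (n : ℕ) :
    Acoef a z (n + 1) =
      (-z * (a + 2 * n) * Acoef a z n + (1 + n * (2 - z)) * Bcoef a z n) / (n + 1) ∧
    Bcoef a z (n + 1) =
      (z * (2 - z) * (a + 2 * n) * Acoef a z n +
          (z * (a + 2) + n * (6 * z - z ^ 2 - 4) - 2) * Bcoef a z n) /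
        ((n + 1) * (1 - z)) := by
  have hz₁ : 1 - z ≠ 0 := by
    intro h
    obtain rfl : z = 1 := (sub_eq_zero.mp h).symm
    simp at hz
  have hrec : TwoPoint.Recurrence a z (Acoef a z) (Bcoef a z) n := by
    rw [TwoPoint.Acoef_eq a z hz₁, TwoPoint.Bcoef_eq a z hz₁]
    exact (TwoPoint.recurrence_polyPart a z n).add_const_mul
      ((TwoPoint.recurrence_polyPart a _ n).reflect hz₁)
  have hn : (n + 1 : ℂ) ≠ 0 := Nat.cast_add_one_ne_zero n
  exact ⟨by rw [eq_div_iff hn]; linear_combination hrec.1,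
    by rw [eq_div_iff (mul_ne_zero hn hz₁)]; linear_combination hrec.2⟩
end

section
/- If f(t) = \sum_{n=0}^\infty [A_n + B_n t] t^n (t-1)^n is a convergent two-point Taylor expansion on a Cassini oval neighborhood of {0,1}, then f'(t) = \sum_{n=0}^\infty \{[(2n+1)B_n - (n+1)A_{n+1}] + (n+1)(2A_{n+1} + B_{n+1}) t\} t^n (t-1)^n on that region. -/
/-!
With `w = t * (t - 1)` the expansion reads `f t = a w + t * b w` for the power series
`a w = ∑ Aₙ wⁿ` and `b w = ∑ Bₙ wⁿ`. These converge for `‖w‖ < r`: the two roots `τ`, `1 - τ` of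
`τ (τ - 1) = w` are distinct unless `w = -1/4`, and the two convergent series
`∑ (Aₙ + Bₙ τ) wⁿ`, `∑ (Aₙ + Bₙ (1 - τ)) wⁿ` separate into `∑ Aₙ wⁿ` and `∑ Bₙ wⁿ`.
The chain rule gives `f' = (2t - 1) a' + b + t (2t - 1) b'`, and `t (2t - 1) = 2w + t` turns
this into the stated two-point series.
-/

open Topology

theorem summable_of_summable_add_mul {𝕜 : Type*} [NormedField 𝕜] {u v : ℕ → 𝕜} {t t' : 𝕜}
    (htt' : t ≠ t') (ht : Summable fun n => u n + t * v n)
    (ht' : Summable fun n => u n + t' * v n) : Summable u ∧ Summable v := by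
  have hv : Summable v := ((ht.sub ht').mul_left (t - t')⁻¹).congr fun n => by
    field_simp [sub_ne_zero.mpr htt']
    ring
  exact ⟨(ht.sub (hv.mul_left t)).congr fun n => by ring, hv⟩

section PowerSeries

variable {a : ℕ → ℂ} {x w : ℂ}

theorem exists_norm_mul_pow_le_geometric (ha : Summable fun n => a n * x ^ n) (hx : x ≠ 0) :
    ∃ C, ∀ n (z : ℂ), ‖a n * z ^ n‖ ≤ C * (‖z‖ / ‖x‖) ^ n := by
  obtain ⟨C, hC⟩ := ha.tendsto_atTop_zero.norm.bddAbove_range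
  refine ⟨C, fun n z => ?_⟩
  calc ‖a n * z ^ n‖ = ‖a n * x ^ n‖ * (‖z‖ / ‖x‖) ^ n := by
        rw [norm_mul, norm_mul, norm_pow, norm_pow, div_pow]
        field_simp [norm_ne_zero_iff.mpr hx]
    _ ≤ C * (‖z‖ / ‖x‖) ^ n := by gcongr; exact hC ⟨n, rfl⟩

theorem summable_mul_pow_of_norm_lt (ha : Summable fun n => a n * x ^ n) (hw : ‖w‖ < ‖x‖) :
    Summable fun n => a n * w ^ n := by
  have hx : x ≠ 0 := norm_pos_iff.mp ((norm_nonneg w).trans_lt hw)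
  obtain ⟨C, hC⟩ := exists_norm_mul_pow_le_geometric ha hx
  refine .of_norm_bounded ((summable_geometric_of_lt_one (by positivity) ?_).mul_left C)
    fun n => hC n w
  exact (div_lt_one (norm_pos_iff.mpr hx)).mpr hw

theorem differentiableAt_tsum_mul_pow_and_hasSum_deriv (ha : Summable fun n => a n * x ^ n)
    (hw : ‖w‖ < ‖x‖) :
    DifferentiableAt ℂ (fun z => ∑' n, a n * z ^ n) w ∧
      HasSum (fun n => (n + 1) * a (n + 1) * w ^ n) (deriv (fun z => ∑' n, a n * z ^ n) w) := by
  have hx : x ≠ 0 := norm_pos_iff.mp ((norm_nonneg w).trans_lt hw)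
  obtain ⟨C, hC⟩ := exists_norm_mul_pow_le_geometric ha hx
  obtain ⟨ρ, hwρ, hρx⟩ := exists_between hw
  have hu : Summable fun n => C * (ρ / ‖x‖) ^ n :=
    (summable_geometric_of_lt_one (div_nonneg ((norm_nonneg w).trans hwρ.le) (norm_nonneg x))
      ((div_lt_one (norm_pos_iff.mpr hx)).mpr hρx)).mul_left C
  have hdiff : ∀ n, DifferentiableOn ℂ (fun z => a n * z ^ n) (Metric.ball 0 ρ) :=
    fun n => ((differentiable_const _).mul (differentiable_pow n)).differentiableOn
  have hbound : ∀ n, ∀ z ∈ Metric.ball (0 : ℂ) ρ, ‖a n * z ^ n‖ ≤ C * (ρ / ‖x‖) ^ n := by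
    intro n z hz
    have hC0 : 0 ≤ C := (norm_nonneg _).trans ((hC 0 0).trans (by simp))
    refine (hC n z).trans ?_
    gcongr
    exact (mem_ball_zero_iff.mp hz).le
  replace hwρ : w ∈ Metric.ball (0 : ℂ) ρ := mem_ball_zero_iff.mpr hwρ
  refine ⟨(Complex.differentiableOn_tsum_of_summable_norm hu hdiff Metric.isOpen_ball
    hbound).differentiableAt (Metric.isOpen_ball.mem_nhds hwρ), ?_⟩
  have h := Complex.hasSum_deriv_of_summable_norm hu hdiff Metric.isOpen_ball hbound hwρ
  rw [← hasSum_nat_add_iff' 1] at h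
  simpa using h.congr_fun fun n => by
    rw [((hasDerivAt_pow (n + 1) w).const_mul (a (n + 1))).deriv, Nat.add_sub_cancel]
    push_cast
    ring

theorem HasSum.nat_mul_mul_pow {d : ℂ} (h : HasSum (fun n => (n + 1) * a (n + 1) * w ^ n) d) :
    HasSum (fun n => n * a n * w ^ n) (w * d) := by
  rw [← hasSum_nat_add_iff' 1, Finset.sum_range_one]
  simpa using (h.mul_left w).congr_fun fun n => by ring

end PowerSeries

theorem exists_mul_sub_one_eq_of_ne {x : ℂ} (hx : 1 + 4 * x ≠ 0) :
    ∃ τ : ℂ, τ * (τ - 1) = x ∧ τ ≠ 1 - τ := by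
  obtain ⟨z, hz⟩ := IsAlgClosed.exists_pow_nat_eq (1 + 4 * x) two_pos
  refine ⟨(1 + z) / 2, by linear_combination hz / 4, fun h => hx ?_⟩
  rw [← hz, show z = 0 by linear_combination h]
  ring

theorem summable_mul_pow_of_summable_twoPoint {r : ℝ} {A B : ℕ → ℂ}
    (hf : ∀ t : ℂ, ‖t * (t - 1)‖ < r →
      Summable fun n => (A n + B n * t) * (t ^ n * (t - 1) ^ n))
    {x : ℂ} (hx : ‖x‖ < r) (hx4 : 1 + 4 * x ≠ 0) :
    Summable (fun n => A n * x ^ n) ∧ Summable (fun n => B n * x ^ n) := by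
  have hroot : ∀ σ : ℂ, σ * (σ - 1) = x → Summable fun n => A n * x ^ n + σ * (B n * x ^ n) :=
    fun σ hσ => (hf σ (hσ ▸ hx)).congr fun n => by rw [← mul_pow, hσ]; ring
  obtain ⟨τ, hτ, hτ_ne⟩ := exists_mul_sub_one_eq_of_ne hx4
  exact summable_of_summable_add_mul hτ_ne (hroot τ hτ) (hroot (1 - τ) (by rw [← hτ]; ring))

theorem hasDerivAt_comp_add_mul_comp {a b : ℂ → ℂ} {t : ℂ}
    (ha : DifferentiableAt ℂ a (t * (t - 1))) (hb : DifferentiableAt ℂ b (t * (t - 1))) :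
    HasDerivAt (fun y => a (y * (y - 1)) + y * b (y * (y - 1)))
      ((2 * t - 1) * deriv a (t * (t - 1)) + b (t * (t - 1)) +
        (2 * (t * (t - 1)) + t) * deriv b (t * (t - 1))) t := by
  have hq : HasDerivAt (fun y : ℂ => y * (y - 1)) (2 * t - 1) t :=
    ((hasDerivAt_id' t).mul ((hasDerivAt_id' t).sub_const 1)).congr_deriv (by ring)
  have ha' : HasDerivAt (fun y => a (y * (y - 1))) _ t := ha.hasDerivAt.comp t hq
  have hb' : HasDerivAt (fun y => b (y * (y - 1))) _ t := hb.hasDerivAt.comp t hq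
  exact (ha'.fun_add ((hasDerivAt_id' t).fun_mul hb')).congr_deriv (by ring)

theorem eq_tsum_add_mul_tsum_of_twoPoint {r : ℝ} {f : ℂ → ℂ} {A B : ℕ → ℂ}
    (hf : ∀ t : ℂ, ‖t * (t - 1)‖ < r →
      HasSum (fun n => (A n + B n * t) * (t ^ n * (t - 1) ^ n)) (f t))
    {x y : ℂ} (hA : Summable fun n => A n * x ^ n) (hB : Summable fun n => B n * x ^ n)
    (hxr : ‖x‖ < r) (hy : ‖y * (y - 1)‖ < ‖x‖) :
    f y = (∑' n, A n * (y * (y - 1)) ^ n) + y * ∑' n, B n * (y * (y - 1)) ^ n :=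
  (hf y (hy.trans hxr)).unique <| ((summable_mul_pow_of_norm_lt hA hy).hasSum.add
    ((summable_mul_pow_of_norm_lt hB hy).hasSum.mul_left y)).congr_fun fun n => by
      rw [mul_pow]; ring

theorem two_point_derivative_general (r : ℝ) (f : ℂ → ℂ) (A B : ℕ → ℂ)
    (hf : ∀ t : ℂ, ‖t * (t - 1)‖ < r →
      HasSum (fun n : ℕ => (A n + B n * t) * (t ^ n * (t - 1) ^ n)) (f t)) :
    ∀ t : ℂ, ‖t * (t - 1)‖ < r →
      HasSum (fun n : ℕ =>
          (((2 * n + 1 : ℂ) * B n - (n + 1 : ℂ) * A (n + 1)) +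
            (n + 1 : ℂ) * (2 * A (n + 1) + B (n + 1)) * t) * (t ^ n * (t - 1) ^ n))
        (deriv f t) := by
  intro t ht
  obtain ⟨ρ, htρ, hρr⟩ := exists_between ht
  have hρ : 0 < ρ := (norm_nonneg _).trans_lt htρ
  rw [← Complex.norm_of_nonneg hρ.le] at htρ hρr
  obtain ⟨hA, hB⟩ := summable_mul_pow_of_summable_twoPoint (fun t ht => (hf t ht).summable) hρr
    (by norm_cast; positivity)
  have hfab : f =ᶠ[𝓝 t] fun y => (∑' n, A n * (y * (y - 1)) ^ n) +
      y * ∑' n, B n * (y * (y - 1)) ^ n := by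
    filter_upwards [(isOpen_lt (f := fun y : ℂ => ‖y * (y - 1)‖) (by fun_prop)
      continuous_const).mem_nhds htρ] with y hy
    exact eq_tsum_add_mul_tsum_of_twoPoint hf hA hB hρr hy
  obtain ⟨hAd, hA'⟩ := differentiableAt_tsum_mul_pow_and_hasSum_deriv hA htρ
  obtain ⟨hBd, hB'⟩ := differentiableAt_tsum_mul_pow_and_hasSum_deriv hB htρ
  rw [((hasDerivAt_comp_add_mul_comp hAd hBd).congr_of_eventuallyEq hfab).deriv,
    add_mul _ t, mul_assoc]
  refine (((hA'.mul_left (2 * t - 1)).add (summable_mul_pow_of_norm_lt hB htρ).hasSum).add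
    ((hB'.nat_mul_mul_pow.mul_left 2).add (hB'.mul_left t))).congr_fun fun n => ?_
  rw [← mul_pow]
  ring

theorem two_point_derivative (r : ℝ) (hr : 0 < r) (f : ℂ → ℂ) (A B : ℕ → ℂ)
    (hf : ∀ t : ℂ, ‖t * (t - 1)‖ < r →
      HasSum (fun n : ℕ => (A n + B n * t) * (t ^ n * (t - 1) ^ n)) (f t)) :
    ∀ t : ℂ, ‖t * (t - 1)‖ < r →
      HasSum (fun n : ℕ =>
          (((2 * n + 1 : ℂ) * B n - (n + 1 : ℂ) * A (n + 1)) +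
            (n + 1 : ℂ) * (2 * A (n + 1) + B (n + 1)) * t) * (t ^ n * (t - 1) ^ n))
        (deriv f t) :=
  two_point_derivative_general r f A B hf
end
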